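/- arXiv:0805.3219 — 3 statements merged into one kernel-verified Lean document; each statement's English description precedes it below -/
import Mathlib

section
/- For every R > 0 there exists a constant C = C(R) > 0 such that every map u:ℝ→𝕊² with uₓ ∈ H²(ℝ;ℝ³) and ‖uₓ‖_{L²(ℝ;ℝ³)} ≤ R satisfies ‖uₓ‖_{L^∞(ℝ;ℝ³)} ≤ C ( 1 + ‖∇ₓ²uₓ‖_{L²(ℝ;ℝ³)}^{1/4} ). -/
open MeasureTheory Matrix Filter
open scoped Matrix

noncomputable section

/-- ℝ³, the codomain of sphere-valued maps. -/
abbrev R3 := Fin 3 → ℝ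

/-- Covariant derivative, along the sphere-valued map `u`, of a vector field `V` along `u`:
`∇ₓV = Vₓ + (V·uₓ)u`. -/
def covD (u V : ℝ → R3) : ℝ → R3 := fun x => deriv V x + (V x ⬝ᵥ deriv u x) • u x

/-- Iterated covariant derivative along `u`. -/
def covDIter (u : ℝ → R3) : ℕ → (ℝ → R3) → ℝ → R3
  | 0, V => V
  | n + 1, V => covD u (covDIter u n V)

/-- Membership of `f` in the Sobolev space `H^m(ℝ;ℝ³)` (classical-derivative reading):
all derivatives of order `< m` exist and all derivatives of order `≤ m` are in `L²`. -/
def InHm (m : ℕ) (f : ℝ → R3) : Prop :=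
  (∀ j < m, Differentiable ℝ (iteratedDeriv j f)) ∧
  ∀ j ≤ m, MemLp (iteratedDeriv j f) 2 volume

/-- `u ∈ H^{m+1}(ℝ;𝕊²)` : a continuous map into the unit sphere whose derivative `uₓ`
belongs to `H^m(ℝ;ℝ³)`. -/
def SphereSobolev (m : ℕ) (u : ℝ → R3) : Prop :=
  Continuous u ∧ (∀ x, u x ⬝ᵥ u x = 1) ∧ Differentiable ℝ u ∧ InHm m (deriv u)

/-- `u ∈ C(I;H^{m+1}(ℝ;𝕊²))` : `u` is continuous on `I × ℝ`, `u(t) ∈ H^{m+1}(ℝ;𝕊²)` for every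
`t ∈ I`, and `t ↦ uₓ(t,·)` is continuous from `I` into `H^m(ℝ;ℝ³)` (i.e. all `x`-derivatives of
`uₓ` up to order `m` are continuous in `t` with respect to the `L²`-distance). -/
def ContIntoHm (I : Set ℝ) (m : ℕ) (u : ℝ → ℝ → R3) : Prop :=
  ContinuousOn (fun p : ℝ × ℝ => u p.1 p.2) (I ×ˢ (Set.univ : Set ℝ)) ∧
  (∀ t ∈ I, SphereSobolev m (u t)) ∧
  ∀ j ≤ m, ∀ t₀ ∈ I,
    Tendsto
      (fun t =>
        eLpNorm (fun x => iteratedDeriv j (deriv (u t)) x - iteratedDeriv j (deriv (u t₀)) x)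
          2 volume)
      (nhdsWithin t₀ I) (nhds 0)

/-- `u` solves `u_t = -ε∇ₓ³uₓ + a∇ₓ²uₓ + u×uₓₓ + b|uₓ|²uₓ` on `I × ℝ`
(the dispersive flow equation for `ε = 0`, its parabolic regularization for `ε > 0`). -/
def SolvesDF (ε a b : ℝ) (I : Set ℝ) (u : ℝ → ℝ → R3) : Prop :=
  ∀ t ∈ I, ∀ x : ℝ,
    HasDerivWithinAt (fun s => u s x)
      ((-ε) • covDIter (u t) 3 (deriv (u t)) x
        + a • covDIter (u t) 2 (deriv (u t)) x
        + (u t x) ⨯₃ (iteratedDeriv 2 (u t) x)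
        + (b * (deriv (u t) x ⬝ᵥ deriv (u t) x)) • deriv (u t) x)
      I t

/-- The squared `L²(ℝ;ℝ³)`-norm (with the Euclidean inner product on ℝ³). -/
def l2normSq (f : ℝ → R3) : ℝ := ∫ x : ℝ, f x ⬝ᵥ f x

/-- The `L²(ℝ;ℝ³)`-norm (with the Euclidean inner product on ℝ³). -/
def l2norm (f : ℝ → R3) : ℝ := Real.sqrt (l2normSq f)

/-- The `H^m(ℝ;ℝ³)`-norm of `f`. -/
def sobNorm (m : ℕ) (f : ℝ → R3) : ℝ :=
  Real.sqrt (∑ j ∈ Finset.range (m + 1), l2normSq (iteratedDeriv j f))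

/-- The initial value problem with data `u₀` for the equation encoded by `SolvesDF ε a b`
has a unique solution in the class `C(I;H^{m+1}(ℝ;𝕊²))`. -/
def IsUniqueSolOn (I : Set ℝ) (ε a b : ℝ) (m : ℕ) (u₀ : ℝ → R3) : Prop :=
  ∃ u : ℝ → ℝ → R3,
    (ContIntoHm I m u ∧ SolvesDF ε a b I u ∧ ∀ x, u 0 x = u₀ x) ∧
    ∀ v : ℝ → ℝ → R3,
      (ContIntoHm I m v ∧ SolvesDF ε a b I v ∧ ∀ x, v 0 x = u₀ x) →
      ∀ t ∈ I, ∀ x, v t x = u t x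

/-!
Write `p = uₓ`. Differentiating `|u|² = 1` gives `u·p = 0` and `u·pₓ = -|p|²`, hence
`∇ₓp = pₓ + |p|²u` and `p·pₓ = p·∇ₓp`. Integrating `(|p|²)ₓ = 2 p·∇ₓp` from `-∞` gives the
Agmon-type bound `|p(x)|² ≤ 2‖p‖₂‖∇ₓp‖₂`. Integrating `(p·pₓ)ₓ` over `ℝ` and expanding
`∇ₓ²p = pₓₓ + 3(p·pₓ)u + |p|²p` gives `‖∇ₓp‖₂² = -∫ p·∇ₓ²p ≤ ‖p‖₂‖∇ₓ²p‖₂`.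
Together, `|p(x)|⁴ ≤ 4‖p‖₂³‖∇ₓ²p‖₂`.
-/

section DotProduct

variable {ι : Type*} [Fintype ι]

theorem dotProduct_self_nonneg (v : ι → ℝ) : 0 ≤ v ⬝ᵥ v := by
  simpa using dotProduct_self_star_nonneg v

theorem dotProduct_sq_le (v w : ι → ℝ) : (v ⬝ᵥ w) ^ 2 ≤ (v ⬝ᵥ v) * (w ⬝ᵥ w) := by
  simpa [dotProduct, sq] using Finset.sum_mul_sq_le_sq_mul_sq Finset.univ v w

theorem abs_dotProduct_le (v w : ι → ℝ) :
    |v ⬝ᵥ w| ≤ √(v ⬝ᵥ v) * √(w ⬝ᵥ w) := by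
  rw [← Real.sqrt_sq_eq_abs, ← Real.sqrt_mul (dotProduct_self_nonneg v)]
  exact Real.sqrt_le_sqrt (dotProduct_sq_le v w)

theorem norm_le_sqrt_dotProduct_self (v : ι → ℝ) : ‖v‖ ≤ √(v ⬝ᵥ v) := by
  refine (pi_norm_le_iff_of_nonneg (Real.sqrt_nonneg _)).2 fun i => ?_
  rw [Real.norm_eq_abs, ← Real.sqrt_sq_eq_abs]
  refine Real.sqrt_le_sqrt ?_
  rw [sq]
  exact Finset.single_le_sum (fun j _ => mul_self_nonneg (v j)) (Finset.mem_univ i)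

theorem HasDerivAt.dotProduct {f g : ℝ → ι → ℝ} {f' g' : ι → ℝ} {x : ℝ}
    (hf : HasDerivAt f f' x) (hg : HasDerivAt g g' x) :
    HasDerivAt (fun y => f y ⬝ᵥ g y) (f' ⬝ᵥ g x + f x ⬝ᵥ g') x := by
  simpa [_root_.dotProduct, Finset.sum_add_distrib] using
    HasDerivAt.fun_sum fun i _ => ((hasDerivAt_pi.1 hf) i).mul ((hasDerivAt_pi.1 hg) i)

theorem HasDerivAt.dotProduct_self {f : ℝ → ι → ℝ} {f' : ι → ℝ} {x : ℝ}
    (hf : HasDerivAt f f' x) : HasDerivAt (fun y => f y ⬝ᵥ f y) (2 * (f x ⬝ᵥ f')) x := by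
  convert hf.dotProduct hf using 1
  rw [dotProduct_comm f']
  ring

end DotProduct

section Lp

variable {α ι : Type*} [Fintype ι] [MeasurableSpace α] {μ : Measure α}

open ENNReal in
theorem MeasureTheory.MemLp.dotProduct {p q r : ℝ≥0∞} [HolderTriple p q r]
    {F G : α → ι → ℝ} (hF : MemLp F p μ) (hG : MemLp G q μ) : MemLp (fun x => F x ⬝ᵥ G x) r μ := by
  simp only [_root_.dotProduct]
  exact memLp_finsetSum _ fun i _ => (hG.eval i).mul' (r := r) (hF.eval i)

theorem MeasureTheory.MemLp.integrable_dotProduct {F G : α → ι → ℝ} (hF : MemLp F 2 μ)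
    (hG : MemLp G 2 μ) : Integrable (fun x => F x ⬝ᵥ G x) μ :=
  memLp_one_iff_integrable.1 (hF.dotProduct hG)

theorem memLp_top_of_dotProduct_self_le {F : α → ι → ℝ} (hF : AEStronglyMeasurable F μ)
    {C : ℝ} (hC : ∀ x, F x ⬝ᵥ F x ≤ C) : MemLp F ⊤ μ :=
  memLp_top_of_bound hF √C <| .of_forall fun x =>
    (norm_le_sqrt_dotProduct_self (F x)).trans (Real.sqrt_le_sqrt (hC x))

theorem memLp_sqrt_dotProduct_self {F : α → ι → ℝ} (hF : MemLp F 2 μ) :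
    MemLp (fun x => √(F x ⬝ᵥ F x)) 2 μ := by
  have hint := hF.integrable_dotProduct hF
  rw [memLp_two_iff_integrable_sq
    (Real.continuous_sqrt.comp_aestronglyMeasurable hint.aestronglyMeasurable)]
  exact hint.congr (.of_forall fun x => (Real.sq_sqrt (dotProduct_self_nonneg _)).symm)

end Lp

theorem l2norm_nonneg (F : ℝ → R3) : 0 ≤ l2norm F :=
  Real.sqrt_nonneg _

theorem sq_l2norm (F : ℝ → R3) : l2norm F ^ 2 = l2normSq F :=
  Real.sq_sqrt (integral_nonneg fun x => dotProduct_self_nonneg (F x))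

theorem integral_abs_dotProduct_le {F G : ℝ → R3} (hF : MemLp F 2 volume)
    (hG : MemLp G 2 volume) : ∫ x, |F x ⬝ᵥ G x| ≤ l2norm F * l2norm G := by
  have hF' := memLp_sqrt_dotProduct_self hF
  have hG' := memLp_sqrt_dotProduct_self hG
  have holder := integral_mul_le_Lp_mul_Lq_of_nonneg Real.HolderConjugate.two_two
    (.of_forall fun x => Real.sqrt_nonneg _) (.of_forall fun x => Real.sqrt_nonneg _)
    (by simpa using hF') (by simpa using hG')
  simp only [Real.rpow_two, Real.sq_sqrt (dotProduct_self_nonneg _), ← Real.sqrt_eq_rpow]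
    at holder
  calc ∫ x, |F x ⬝ᵥ G x| ≤ ∫ x, √(F x ⬝ᵥ F x) * √(G x ⬝ᵥ G x) :=
        integral_mono (hF.integrable_dotProduct hG).abs
          (memLp_one_iff_integrable.1 (hG'.mul' hF')) fun x => abs_dotProduct_le _ _
    _ ≤ l2norm F * l2norm G := holder

theorem norm_le_integral_norm_of_hasDerivAt {E : Type*} [NormedAddCommGroup E]
    [NormedSpace ℝ E] [CompleteSpace E] {f f' : ℝ → E} (hderiv : ∀ x, HasDerivAt f (f' x) x)
    (hf' : Integrable f') (hf : Integrable f) (x : ℝ) : ‖f x‖ ≤ ∫ y, ‖f' y‖ := by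
  have hbot := tendsto_zero_of_hasDerivAt_of_integrableOn_Iic (a := x) (fun y _ => hderiv y)
    hf'.integrableOn hf.integrableOn
  calc ‖f x‖ = ‖∫ y in Set.Iic x, f' y‖ := by
        rw [integral_Iic_of_hasDerivAt_of_tendsto' (fun y _ => hderiv y) hf'.integrableOn hbot,
          sub_zero]
    _ ≤ ∫ y in Set.Iic x, ‖f' y‖ := norm_integral_le_integral_norm _
    _ ≤ ∫ y, ‖f' y‖ := setIntegral_le_integral hf'.norm (.of_forall fun y => norm_nonneg _)

theorem dotProduct_self_le_two_mul_integral {ι : Type*} [Fintype ι] {F F' : ℝ → ι → ℝ}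
    (hderiv : ∀ x, HasDerivAt F (F' x) x) (hF : MemLp F 2 volume) (hF' : MemLp F' 2 volume)
    (x : ℝ) : F x ⬝ᵥ F x ≤ 2 * ∫ y, |F y ⬝ᵥ F' y| := by
  have h := norm_le_integral_norm_of_hasDerivAt (fun y => (hderiv y).dotProduct_self)
    ((hF.integrable_dotProduct hF').const_mul 2) (hF.integrable_dotProduct hF) x
  simpa [abs_of_nonneg (dotProduct_self_nonneg (F x)), integral_const_mul] using h

theorem memLp_top_of_hasDerivAt {ι : Type*} [Fintype ι] {F F' : ℝ → ι → ℝ}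
    (hderiv : ∀ x, HasDerivAt F (F' x) x) (hF : MemLp F 2 volume) (hF' : MemLp F' 2 volume) :
    MemLp F ⊤ volume :=
  memLp_top_of_dotProduct_self_le hF.1 (dotProduct_self_le_two_mul_integral hderiv hF hF')

theorem le_rpow_quarter_mul_rpow_quarter {s a b : ℝ} (hs : 0 ≤ s) (ha : 0 ≤ a) (hb : 0 ≤ b)
    (h : s ^ 4 ≤ a * b) : s ≤ a ^ ((1 : ℝ) / 4) * b ^ ((1 : ℝ) / 4) := by
  rw [← Real.mul_rpow ha hb, one_div]
  calc s = (s ^ 4) ^ ((4 : ℕ)⁻¹ : ℝ) := (Real.pow_rpow_inv_natCast hs (by norm_num)).symm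
    _ ≤ (a * b) ^ ((4 : ℕ)⁻¹ : ℝ) := Real.rpow_le_rpow (by positivity) h (by positivity)
    _ = (a * b) ^ (4⁻¹ : ℝ) := by norm_num

section SphereCurve

variable {ι : Type*} [Fintype ι] {u : ℝ → ι → ℝ}

theorem deriv_dotProduct_eq_zero_of_sphere (hsph : ∀ x, u x ⬝ᵥ u x = 1)
    (hu : Differentiable ℝ u) (x : ℝ) : deriv u x ⬝ᵥ u x = 0 := by
  have h := (hu x).hasDerivAt.dotProduct_self
  simp only [hsph] at h
  have := h.unique (hasDerivAt_const x 1)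
  rw [dotProduct_comm]
  linarith

theorem deriv_deriv_dotProduct_eq_of_sphere (hsph : ∀ x, u x ⬝ᵥ u x = 1)
    (hu : Differentiable ℝ u) (hu' : Differentiable ℝ (deriv u)) (x : ℝ) :
    deriv (deriv u) x ⬝ᵥ u x = -(deriv u x ⬝ᵥ deriv u x) := by
  have h := (hu' x).hasDerivAt.dotProduct (hu x).hasDerivAt
  simp only [deriv_dotProduct_eq_zero_of_sphere hsph hu] at h
  have := h.unique (hasDerivAt_const x 0)
  linarith

theorem memLp_top_of_sphere (hsph : ∀ x, u x ⬝ᵥ u x = 1) (hu : Continuous u) :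
    MemLp u ⊤ volume :=
  memLp_top_of_dotProduct_self_le hu.aestronglyMeasurable fun x => (hsph x).le

end SphereCurve

section CovariantDerivative

variable {u : ℝ → R3}

theorem covD_deriv_apply (x : ℝ) :
    covD u (deriv u) x = deriv (deriv u) x + (deriv u x ⬝ᵥ deriv u x) • u x :=
  rfl

theorem hasDerivAt_covD_deriv (hu : Differentiable ℝ u) (hu' : Differentiable ℝ (deriv u))
    (hu'' : Differentiable ℝ (deriv (deriv u))) (x : ℝ) :
    HasDerivAt (covD u (deriv u)) (deriv (deriv (deriv u)) x
      + ((deriv u x ⬝ᵥ deriv u x) • deriv u x + (2 * (deriv u x ⬝ᵥ deriv (deriv u) x)) • u x)) x :=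
  (hu'' x).hasDerivAt.add ((hu' x).hasDerivAt.dotProduct_self.smul (hu x).hasDerivAt)

theorem covDIter_two_deriv_apply (hsph : ∀ x, u x ⬝ᵥ u x = 1) (hu : Differentiable ℝ u)
    (hu' : Differentiable ℝ (deriv u)) (hu'' : Differentiable ℝ (deriv (deriv u))) (x : ℝ) :
    covDIter u 2 (deriv u) x = deriv (deriv (deriv u)) x
      + (3 * (deriv u x ⬝ᵥ deriv (deriv u) x)) • u x
      + (deriv u x ⬝ᵥ deriv u x) • deriv u x := by
  have hpu := deriv_dotProduct_eq_zero_of_sphere hsph hu x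
  change deriv (covD u (deriv u)) x + (covD u (deriv u) x ⬝ᵥ deriv u x) • u x = _
  rw [(hasDerivAt_covD_deriv hu hu' hu'' x).deriv, covD_deriv_apply, add_dotProduct,
    smul_dotProduct, dotProduct_comm (u x), hpu, dotProduct_comm (deriv (deriv u) x)]
  module

theorem deriv_dotProduct_covD_deriv (hsph : ∀ x, u x ⬝ᵥ u x = 1) (hu : Differentiable ℝ u)
    (x : ℝ) : deriv u x ⬝ᵥ covD u (deriv u) x = deriv u x ⬝ᵥ deriv (deriv u) x := by
  rw [covD_deriv_apply, dotProduct_add, dotProduct_smul,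
    deriv_dotProduct_eq_zero_of_sphere hsph hu, smul_zero, add_zero]

theorem covD_deriv_dotProduct_self (hsph : ∀ x, u x ⬝ᵥ u x = 1) (hu : Differentiable ℝ u)
    (hu' : Differentiable ℝ (deriv u)) (x : ℝ) :
    covD u (deriv u) x ⬝ᵥ covD u (deriv u) x
      = deriv (deriv u) x ⬝ᵥ deriv (deriv u) x - (deriv u x ⬝ᵥ deriv u x) ^ 2 := by
  have hqu := deriv_deriv_dotProduct_eq_of_sphere hsph hu hu' x
  simp only [covD_deriv_apply, dotProduct_add, add_dotProduct, dotProduct_smul, smul_dotProduct,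
    dotProduct_comm (u x) (deriv (deriv u) x), hqu, hsph, smul_eq_mul]
  ring

theorem deriv_dotProduct_covDIter_two (hsph : ∀ x, u x ⬝ᵥ u x = 1) (hu : Differentiable ℝ u)
    (hu' : Differentiable ℝ (deriv u)) (hu'' : Differentiable ℝ (deriv (deriv u))) (x : ℝ) :
    deriv u x ⬝ᵥ covDIter u 2 (deriv u) x
      = deriv u x ⬝ᵥ deriv (deriv (deriv u)) x + (deriv u x ⬝ᵥ deriv u x) ^ 2 := by
  simp only [covDIter_two_deriv_apply hsph hu hu' hu'' x, dotProduct_add, dotProduct_smul,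
    deriv_dotProduct_eq_zero_of_sphere hsph hu, smul_eq_mul]
  ring

end CovariantDerivative

namespace InHm

variable {m : ℕ} {f : ℝ → R3}

theorem differentiable (hf : InHm m f) (hm : 1 ≤ m) : Differentiable ℝ f := by
  simpa using hf.1 0 (by omega)

theorem differentiable_deriv (hf : InHm m f) (hm : 2 ≤ m) : Differentiable ℝ (deriv f) := by
  simpa using hf.1 1 (by omega)

theorem memLp (hf : InHm m f) : MemLp f 2 volume := by
  simpa using hf.2 0 (by omega)

theorem memLp_deriv (hf : InHm m f) (hm : 1 ≤ m) : MemLp (deriv f) 2 volume := by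
  simpa using hf.2 1 hm

theorem memLp_deriv_deriv (hf : InHm m f) (hm : 2 ≤ m) : MemLp (deriv (deriv f)) 2 volume := by
  simpa [iteratedDeriv_succ] using hf.2 2 hm

theorem memLp_top (hf : InHm m f) (hm : 1 ≤ m) : MemLp f ⊤ volume :=
  memLp_top_of_hasDerivAt (fun x => (hf.differentiable hm x).hasDerivAt) hf.memLp
    (hf.memLp_deriv hm)

end InHm

section SphereMap

variable {u : ℝ → R3}

theorem memLp_covD_deriv (hsph : ∀ x, u x ⬝ᵥ u x = 1) (hu : Differentiable ℝ u)
    (hH : InHm 2 (deriv u)) : MemLp (covD u (deriv u)) 2 volume :=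
  (hH.memLp_deriv one_le_two).add
    ((memLp_top_of_sphere hsph hu.continuous).smul
      (hH.memLp.dotProduct (r := 2) (hH.memLp_top one_le_two)))

theorem memLp_covDIter_two_deriv (hsph : ∀ x, u x ⬝ᵥ u x = 1) (hu : Differentiable ℝ u)
    (hH : InHm 2 (deriv u)) : MemLp (covDIter u 2 (deriv u)) 2 volume := by
  rw [funext (covDIter_two_deriv_apply hsph hu (hH.differentiable one_le_two)
    (hH.differentiable_deriv le_rfl))]
  have hu_top := memLp_top_of_sphere hsph hu.continuous
  have hp_top := hH.memLp_top one_le_two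
  have hpq : MemLp (fun x => deriv u x ⬝ᵥ deriv (deriv u) x) 2 volume :=
    hp_top.dotProduct (hH.memLp_deriv one_le_two)
  have hpp : MemLp (fun x => deriv u x ⬝ᵥ deriv u x) 2 volume := hp_top.dotProduct hH.memLp
  exact ((hH.memLp_deriv_deriv le_rfl).add (hu_top.smul (hpq.const_mul 3))).add (hp_top.smul hpp)

theorem sq_l2norm_covD_deriv_le_l2norm_mul_l2norm_covDIter (hsph : ∀ x, u x ⬝ᵥ u x = 1)
    (hu : Differentiable ℝ u) (hH : InHm 2 (deriv u)) :
    l2norm (covD u (deriv u)) ^ 2 ≤ l2norm (deriv u) * l2norm (covDIter u 2 (deriv u)) := by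
  have hu' := hH.differentiable one_le_two
  have hu'' := hH.differentiable_deriv le_rfl
  have hp := hH.memLp
  have hq := hH.memLp_deriv one_le_two
  have hW := memLp_covD_deriv hsph hu hH
  have hZ := memLp_covDIter_two_deriv hsph hu hH
  have hibp : ∫ x, (deriv (deriv u) x ⬝ᵥ deriv (deriv u) x
      + deriv u x ⬝ᵥ deriv (deriv (deriv u)) x) = 0 :=
    integral_eq_zero_of_hasDerivAt_of_integrable
      (fun x => (hu' x).hasDerivAt.dotProduct (hu'' x).hasDerivAt)
      ((hq.integrable_dotProduct hq).add (hp.integrable_dotProduct (hH.memLp_deriv_deriv le_rfl)))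
      (hp.integrable_dotProduct hq)
  have hsum : ∫ x, covD u (deriv u) x ⬝ᵥ covD u (deriv u) x
      = -∫ x, deriv u x ⬝ᵥ covDIter u 2 (deriv u) x := by
    rw [eq_neg_iff_add_eq_zero, ← integral_add (hW.integrable_dotProduct hW)
      (hp.integrable_dotProduct hZ), ← hibp]
    congr 1 with x
    rw [covD_deriv_dotProduct_self hsph hu hu', deriv_dotProduct_covDIter_two hsph hu hu' hu'']
    ring
  calc l2norm (covD u (deriv u)) ^ 2 = -∫ x, deriv u x ⬝ᵥ covDIter u 2 (deriv u) x := by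
        rw [sq_l2norm, l2normSq, hsum]
    _ ≤ ∫ x, |deriv u x ⬝ᵥ covDIter u 2 (deriv u) x| :=
        (neg_le_abs _).trans abs_integral_le_integral_abs
    _ ≤ _ := integral_abs_dotProduct_le hp hZ

theorem dotProduct_self_deriv_le_two_mul_l2norm_mul_l2norm_covD (hsph : ∀ x, u x ⬝ᵥ u x = 1)
    (hu : Differentiable ℝ u) (hH : InHm 2 (deriv u)) (x : ℝ) :
    deriv u x ⬝ᵥ deriv u x ≤ 2 * (l2norm (deriv u) * l2norm (covD u (deriv u))) := by
  have h := dotProduct_self_le_two_mul_integral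
    (fun y => (hH.differentiable one_le_two y).hasDerivAt) hH.memLp (hH.memLp_deriv one_le_two) x
  simp only [← deriv_dotProduct_covD_deriv hsph hu] at h
  exact h.trans (mul_le_mul_of_nonneg_left
    (integral_abs_dotProduct_le hH.memLp (memLp_covD_deriv hsph hu hH)) zero_le_two)

theorem sqrt_dotProduct_self_deriv_pow_four_le (hsph : ∀ x, u x ⬝ᵥ u x = 1)
    (hu : Differentiable ℝ u) (hH : InHm 2 (deriv u)) (x : ℝ) :
    √(deriv u x ⬝ᵥ deriv u x) ^ 4
      ≤ 4 * l2norm (deriv u) ^ 3 * l2norm (covDIter u 2 (deriv u)) := by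
  have hpx := dotProduct_self_deriv_le_two_mul_l2norm_mul_l2norm_covD hsph hu hH x
  have hW := sq_l2norm_covD_deriv_le_l2norm_mul_l2norm_covDIter hsph hu hH
  rw [show 4 = 2 * 2 by rfl, pow_mul, Real.sq_sqrt (dotProduct_self_nonneg _)]
  calc (deriv u x ⬝ᵥ deriv u x) ^ 2
      ≤ (2 * (l2norm (deriv u) * l2norm (covD u (deriv u)))) ^ 2 :=
        pow_le_pow_left₀ (dotProduct_self_nonneg _) hpx 2
    _ = 4 * l2norm (deriv u) ^ 2 * l2norm (covD u (deriv u)) ^ 2 := by ring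
    _ ≤ 4 * l2norm (deriv u) ^ 2 * (l2norm (deriv u) * l2norm (covDIter u 2 (deriv u))) := by
        gcongr
    _ = _ := by ring

end SphereMap

/-- For every `R > 0` there is `C = C(R) > 0` such that every `u : ℝ → 𝕊²`
with `uₓ ∈ H²(ℝ;ℝ³)` and `‖uₓ‖_{L²} ≤ R` satisfies
`‖uₓ‖_{L^∞} ≤ C (1 + ‖∇ₓ²uₓ‖_{L²}^{1/4})` (the pointwise Euclidean length of `uₓ` is bounded
by the right-hand side). -/
theorem ux_Linfty_bound (R : ℝ) (hR : 0 < R) :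
    ∃ C : ℝ, 0 < C ∧
      ∀ u : ℝ → R3, Continuous u → (∀ x, u x ⬝ᵥ u x = 1) → Differentiable ℝ u →
        InHm 2 (deriv u) → l2norm (deriv u) ≤ R →
        ∀ x : ℝ, Real.sqrt (deriv u x ⬝ᵥ deriv u x)
          ≤ C * (1 + l2norm (covDIter u 2 (deriv u)) ^ ((1 : ℝ) / 4)) := by
  set K := (4 * R ^ 3) ^ ((1 : ℝ) / 4)
  have hK : 0 ≤ K := by positivity
  refine ⟨1 + K, by positivity, fun u _ hsph hu hH hpR x => ?_⟩
  set Z := l2norm (covDIter u 2 (deriv u))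
  have hs : √(deriv u x ⬝ᵥ deriv u x) ≤ K * Z ^ ((1 : ℝ) / 4) :=
    le_rpow_quarter_mul_rpow_quarter (Real.sqrt_nonneg _) (by positivity) (l2norm_nonneg _)
      ((sqrt_dotProduct_self_deriv_pow_four_le hsph hu hH x).trans
        (by gcongr; exacts [l2norm_nonneg _, l2norm_nonneg _]))
  have ht : 0 ≤ Z ^ ((1 : ℝ) / 4) := Real.rpow_nonneg (l2norm_nonneg _) _
  nlinarith

end
end

section
/- For every map u:ℝ→𝕊² of class C³, the identity ∇ₓ²uₓ + (1/2)|uₓ|²uₓ = uₓₓₓ + (3/2) ∂ₓ{ uₓ×(u×uₓ) } holds pointwise on ℝ. Consequently, for maps into 𝕊² the equation u_t = a∇ₓ²uₓ + u×uₓₓ + (a/2)|uₓ|²uₓ coincides with the Fukumoto–Miyazaki vortex-filament equation u_t = u×uₓₓ + a[ uₓₓₓ + (3/2){uₓ×(u×uₓ)}ₓ ]. -/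
/-!
On the sphere, differentiating `u·u = 1` gives `u·uₓ = 0`. Hence `∇ₓuₓ = uₓₓ + |uₓ|²u`, and by the
triple-product expansion also `uₓ×(u×uₓ) = |uₓ|²u`: both sides are governed by the normal field
`|uₓ|²u`. Differentiating once more, with `(|uₓ|²)ₓ = 2 uₓₓ·uₓ` and `(uₓₓ + |uₓ|²u)·uₓ = uₓₓ·uₓ`,
both sides of the identity equal `uₓₓₓ + 3(uₓₓ·uₓ)u + (3/2)|uₓ|²uₓ`.
-/

open MeasureTheory Matrix Filter
open scoped Matrix

noncomputable section

section DotProduct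

variable {ι : Type*} [Fintype ι]

theorem dotProduct_deriv_eq_zero_of_dotProduct_self_eq {u : ℝ → ι → ℝ} {c x : ℝ}
    (hc : ∀ y, u y ⬝ᵥ u y = c) (hu : DifferentiableAt ℝ u x) : u x ⬝ᵥ deriv u x = 0 := by
  have hd := hu.hasDerivAt.dotProduct hu.hasDerivAt
  rw [funext hc, dotProduct_comm (deriv u x)] at hd
  linarith [(hasDerivAt_const x c).unique hd]

end DotProduct

theorem cross_cross_self_of_dotProduct_eq_zero {R : Type*} [CommRing R] {a b : Fin 3 → R}
    (h : b ⬝ᵥ a = 0) : a ⨯₃ (b ⨯₃ a) = (a ⬝ᵥ a) • b := by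
  rw [cross_cross_eq_smul_sub_smul', h, zero_smul, sub_zero]

section SphereCurve

variable {u : ℝ → R3}

theorem hasDerivAt_dotProduct_self_deriv_smul {x : ℝ} (hu : DifferentiableAt ℝ u x)
    (hu' : DifferentiableAt ℝ (deriv u) x) :
    HasDerivAt (fun y => (deriv u y ⬝ᵥ deriv u y) • u y)
      ((2 * (deriv (deriv u) x ⬝ᵥ deriv u x)) • u x + (deriv u x ⬝ᵥ deriv u x) • deriv u x) x := by
  refine ((hu'.hasDerivAt.dotProduct hu'.hasDerivAt).smul hu.hasDerivAt).congr_deriv ?_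
  rw [dotProduct_comm (deriv u x) (deriv (deriv u) x)]
  module

theorem covDIter_two_deriv_of_sphere {x : ℝ} (hsph : ∀ y, u y ⬝ᵥ u y = 1)
    (hu : DifferentiableAt ℝ u x)
    (hu' : DifferentiableAt ℝ (deriv u) x) (hu'' : DifferentiableAt ℝ (deriv (deriv u)) x) :
    covDIter u 2 (deriv u) x
      = deriv (deriv (deriv u)) x + (3 * (deriv (deriv u) x ⬝ᵥ deriv u x)) • u x
        + (deriv u x ⬝ᵥ deriv u x) • deriv u x := by
  have hnormal : u x ⬝ᵥ deriv u x = 0 := dotProduct_deriv_eq_zero_of_dotProduct_self_eq hsph hu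
  have hcovD : HasDerivAt (covD u (deriv u))
      (deriv (deriv (deriv u)) x + ((2 * (deriv (deriv u) x ⬝ᵥ deriv u x)) • u x
        + (deriv u x ⬝ᵥ deriv u x) • deriv u x)) x :=
    hu''.hasDerivAt.add (hasDerivAt_dotProduct_self_deriv_smul hu hu')
  change deriv (covD u (deriv u)) x + (covD u (deriv u) x ⬝ᵥ deriv u x) • u x = _
  rw [hcovD.deriv, covD, add_dotProduct, smul_dotProduct, hnormal, smul_zero, add_zero]
  module

theorem deriv_cross_cross_of_sphere {x : ℝ} (hsph : ∀ y, u y ⬝ᵥ u y = 1)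
    (hu : Differentiable ℝ u) (hu' : DifferentiableAt ℝ (deriv u) x) :
    deriv (fun y => deriv u y ⨯₃ (u y ⨯₃ deriv u y)) x
      = (2 * (deriv (deriv u) x ⬝ᵥ deriv u x)) • u x + (deriv u x ⬝ᵥ deriv u x) • deriv u x := by
  have hnormal : ∀ y, u y ⬝ᵥ deriv u y = 0 := fun y =>
    dotProduct_deriv_eq_zero_of_dotProduct_self_eq hsph (hu y)
  simp_rw [cross_cross_self_of_dotProduct_eq_zero (hnormal _)]
  exact (hasDerivAt_dotProduct_self_deriv_smul (hu x) hu').deriv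

theorem covDIter_two_deriv_add_half_smul_eq_of_sphere (hu : ContDiff ℝ 3 u)
    (hsph : ∀ y, u y ⬝ᵥ u y = 1) (x : ℝ) :
    covDIter u 2 (deriv u) x + ((1 / 2) * (deriv u x ⬝ᵥ deriv u x)) • deriv u x
      = iteratedDeriv 3 u x
        + (3 / 2 : ℝ) • deriv (fun y => (deriv u y) ⨯₃ ((u y) ⨯₃ (deriv u y))) x := by
  have hdiff : ∀ k < 3, Differentiable ℝ (deriv^[k] u) := fun k hk => by
    simpa only [iteratedDeriv_eq_iterate] using
      hu.differentiable_iteratedDeriv k (by exact_mod_cast hk)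
  rw [covDIter_two_deriv_of_sphere hsph (hdiff 0 (by norm_num) x) (hdiff 1 (by norm_num) x)
      (hdiff 2 (by norm_num) x),
    deriv_cross_cross_of_sphere hsph (hdiff 0 (by norm_num)) (hdiff 1 (by norm_num) x),
    iteratedDeriv_eq_iterate]
  simp only [Function.iterate_succ, Function.iterate_zero, Function.comp_apply, id]
  module

end SphereCurve

/-- For every `C³` map `u : ℝ → 𝕊²`, the identity
`∇ₓ²uₓ + (1/2)|uₓ|²uₓ = uₓₓₓ + (3/2)∂ₓ{uₓ×(u×uₓ)}` holds pointwise; consequently, for maps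
into `𝕊²`, `a∇ₓ²uₓ + u×uₓₓ + (a/2)|uₓ|²uₓ = u×uₓₓ + a[uₓₓₓ + (3/2){uₓ×(u×uₓ)}ₓ]`, i.e. the
third-order dispersive flow equation coincides with the Fukumoto–Miyazaki equation. -/
theorem fukumoto_miyazaki_identity
    (u : ℝ → R3) (hu : ContDiff ℝ 3 u) (hsph : ∀ x, u x ⬝ᵥ u x = 1) :
    (∀ x : ℝ,
      covDIter u 2 (deriv u) x + ((1 / 2) * (deriv u x ⬝ᵥ deriv u x)) • deriv u x
        = iteratedDeriv 3 u x
          + (3 / 2 : ℝ) • deriv (fun y => (deriv u y) ⨯₃ ((u y) ⨯₃ (deriv u y))) x) ∧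
    ∀ (a : ℝ) (x : ℝ),
      a • covDIter u 2 (deriv u) x + (u x) ⨯₃ (iteratedDeriv 2 u x)
          + (a / 2 * (deriv u x ⬝ᵥ deriv u x)) • deriv u x
        = (u x) ⨯₃ (iteratedDeriv 2 u x)
          + a • (iteratedDeriv 3 u x
              + (3 / 2 : ℝ) • deriv (fun y => (deriv u y) ⨯₃ ((u y) ⨯₃ (deriv u y))) x) := by
  have identity := covDIter_two_deriv_add_half_smul_eq_of_sphere hu hsph
  refine ⟨identity, fun a x => ?_⟩
  rw [← identity x]
  module

end
end

section
/- Let a, b : ℝ → ℂ be smooth functions with Im a ∈ L²(ℝ;ℝ), let f : ℝ×ℝ → ℂ, and let u : ℝ×ℝ → ℂ be C¹ in t and C³ in x and solve u_t + u_{xxx} + a(x)u_x + b(x)u = f(t,x). Define Φ(x) = (1/3)∫_{−∞}^x (Im a(y))² dy and v(t,x) = e^{Φ(x)} u(t,x). Then v solves v_t + v_{xxx} − (Im a(x))² v_{xx} + ( ã(x) + i Im a(x) ) v_x + b̃(x) v = e^{Φ(x)} f(t,x), where ã = Re a + (1/3)(Im a)⁴ − 2 (Im a)(Im a)' is real-valued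 and b̃ = b − Φ''' + 3Φ'Φ'' − (Φ')³ − aΦ' with Φ' = (1/3)(Im a)². In particular, the gauge transformation u ↦ e^{Φ}u converts the non-self-adjoint first-order term i(Im a)∂ₓ into one accompanied by the dissipative second-order term −(Im a)²∂ₓ². -/
open MeasureTheory

/-! Since `e^{-Φ} ∂ₓ e^{Φ} = ∂ₓ + Φ'`, each spatial derivative of `v = e^{Φ} u` is `e^{Φ}`
times a polynomial in `u, u', u'', u'''` whose coefficients involve `Φ' = (Im a)²/3` and its
derivatives. In `v_{xxx}` the coefficient of `u''` is `3Φ' = (Im a)²`, which the new term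
`-(Im a)² v_{xx}` cancels, and `ã`, `b̃` are chosen so that the remaining coefficients of `u'`
and `u` are `a` and `b`. Hence the left-hand side is `e^{Φ}` times the left-hand side of the
equation for `u`. -/

open Set

theorem hasDerivAt_integral_Iic {E : Type*} [NormedAddCommGroup E] [NormedSpace ℝ E]
    [CompleteSpace E] {g : ℝ → E} (hint : ∀ b, IntegrableOn g (Iic b)) (hcont : Continuous g)
    (x : ℝ) : HasDerivAt (fun z => ∫ y in Iic z, g y) (g x) x := by
  have hsplit :
      (fun z => ∫ y in Iic z, g y) = fun z => (∫ y in Iic x, g y) + ∫ y in x..z, g y := by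
    funext z
    rw [← intervalIntegral.integral_Iic_sub_Iic (hint x) (hint z), add_sub_cancel]
  rw [hsplit]
  exact ((hcont.integral_hasStrictDerivAt x x).hasDerivAt).const_add _

theorem ContDiff.hasDerivAt_iteratedDeriv {F : Type*} [NormedAddCommGroup F] [NormedSpace ℝ F]
    {f : ℝ → F} {n : WithTop ℕ∞} {k : ℕ} (hf : ContDiff ℝ n f) (hk : k < n) (x : ℝ) :
    HasDerivAt (iteratedDeriv k f) (iteratedDeriv (k + 1) f x) x := by
  rw [iteratedDeriv_succ]
  exact (hf.differentiable_iteratedDeriv k hk x).hasDerivAt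

noncomputable def twistedDeriv (p w : ℝ → ℂ) : ℝ → ℂ := fun x => deriv w x + p x * w x

section TwistedDeriv

variable {Φ p p' w : ℝ → ℂ}

theorem deriv_cexp_mul (hΦ : ∀ x, HasDerivAt Φ (p x) x) (hw : Differentiable ℝ w) :
    deriv (fun x => Complex.exp (Φ x) * w x)
      = fun x => Complex.exp (Φ x) * twistedDeriv p w x := by
  funext x
  rw [((hΦ x).cexp.fun_mul (hw x).hasDerivAt).deriv, twistedDeriv]
  ring

theorem ContDiff.twistedDeriv {n : ℕ} (hp : ContDiff ℝ n p) (hw : ContDiff ℝ (n + 1) w) :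
    ContDiff ℝ n (twistedDeriv p w) :=
  hw.deriv'.add (hp.mul hw.of_succ)

theorem iteratedDeriv_cexp_mul (hΦ : ∀ x, HasDerivAt Φ (p x) x) {n : ℕ} (hp : ContDiff ℝ n p)
    (hw : ContDiff ℝ n w) :
    iteratedDeriv n (fun x => Complex.exp (Φ x) * w x)
      = fun x => Complex.exp (Φ x) * (twistedDeriv p)^[n] w x := by
  induction n generalizing w with
  | zero => simp
  | succ n ih =>
    rw [iteratedDeriv_succ', deriv_cexp_mul hΦ (hw.differentiable (by simp)),
      ih hp.of_succ (hp.of_succ.twistedDeriv (by exact_mod_cast hw))]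
    rfl

theorem twistedDeriv_iterate_two (hp : ∀ x, HasDerivAt p (p' x) x) (hw : ContDiff ℝ 2 w) :
    (twistedDeriv p)^[2] w = fun x => iteratedDeriv 2 w x + 2 * p x * deriv w x
      + (p' x + p x ^ 2) * w x := by
  funext x
  have hw1 := hw.hasDerivAt_iteratedDeriv (k := 1) (by norm_num) x
  have hw0 := hw.hasDerivAt_iteratedDeriv (k := 0) (by norm_num) x
  simp only [iteratedDeriv_one, iteratedDeriv_zero, Nat.reduceAdd] at hw1 hw0
  have h : HasDerivAt (twistedDeriv p w) _ x := hw1.fun_add ((hp x).fun_mul hw0)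
  rw [Function.iterate_succ_apply', Function.iterate_one, twistedDeriv, h.deriv,
    twistedDeriv]
  ring

theorem twistedDeriv_iterate_three {x : ℝ} {p'' : ℂ} (hp : ∀ x, HasDerivAt p (p' x) x)
    (hp' : HasDerivAt p' p'' x) (hw : ContDiff ℝ 3 w) :
    (twistedDeriv p)^[3] w x = iteratedDeriv 3 w x + 3 * p x * iteratedDeriv 2 w x
      + 3 * (p' x + p x ^ 2) * deriv w x + (p'' + 3 * p x * p' x + p x ^ 3) * w x := by
  have hw2 := hw.hasDerivAt_iteratedDeriv (k := 2) (by norm_num) x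
  have hw1 := hw.hasDerivAt_iteratedDeriv (k := 1) (by norm_num) x
  have hw0 := hw.hasDerivAt_iteratedDeriv (k := 0) (by norm_num) x
  simp only [iteratedDeriv_one, iteratedDeriv_zero, Nat.reduceAdd] at hw2 hw1 hw0
  have h := (hw2.fun_add ((((hp x).const_mul 2).fun_mul hw1))).fun_add
    ((hp'.fun_add ((hp x).fun_pow 2)).fun_mul hw0)
  rw [Function.iterate_succ_apply', twistedDeriv_iterate_two hp (hw.of_le (by norm_num)),
    twistedDeriv, h.deriv]
  ring

end TwistedDeriv

section RealPhase

variable {Φ p : ℝ → ℝ} {w : ℝ → ℂ}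

theorem deriv_cexp_ofReal_mul (hΦ : ∀ x, HasDerivAt Φ (p x) x) (hw : Differentiable ℝ w)
    (x : ℝ) :
    deriv (fun y => Complex.exp (Φ y) * w y) x = Complex.exp (Φ x) * (deriv w x + p x * w x) :=
  congrFun (deriv_cexp_mul (fun y => (hΦ y).ofReal_comp) hw) x

theorem iteratedDeriv_two_cexp_ofReal_mul (hΦ : ∀ x, HasDerivAt Φ (p x) x)
    (hp : ContDiff ℝ 2 p) (hw : ContDiff ℝ 2 w) (x : ℝ) :
    iteratedDeriv 2 (fun y => Complex.exp (Φ y) * w y) x = Complex.exp (Φ x)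
      * (iteratedDeriv 2 w x + 2 * p x * deriv w x + (deriv p x + p x ^ 2) * w x) := by
  rw [congrFun (iteratedDeriv_cexp_mul (fun y => (hΦ y).ofReal_comp)
      (Complex.ofRealCLM.contDiff.comp hp) hw) x,
    twistedDeriv_iterate_two (fun y => (hp.differentiable (by simp) y).hasDerivAt.ofReal_comp) hw]

theorem iteratedDeriv_three_cexp_ofReal_mul (hΦ : ∀ x, HasDerivAt Φ (p x) x)
    (hp : ContDiff ℝ 3 p) (hw : ContDiff ℝ 3 w) (x : ℝ) :
    iteratedDeriv 3 (fun y => Complex.exp (Φ y) * w y) x = Complex.exp (Φ x)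
      * (iteratedDeriv 3 w x + 3 * p x * iteratedDeriv 2 w x
        + 3 * (deriv p x + p x ^ 2) * deriv w x
        + (iteratedDeriv 2 p x + 3 * p x * deriv p x + p x ^ 3) * w x) := by
  have hp'' : HasDerivAt (deriv p) (iteratedDeriv 2 p x) x := by
    simpa using hp.hasDerivAt_iteratedDeriv (k := 1) (by norm_num) x
  rw [congrFun (iteratedDeriv_cexp_mul (fun y => (hΦ y).ofReal_comp)
      (Complex.ofRealCLM.contDiff.comp hp) hw) x,
    twistedDeriv_iterate_three (fun y => (hp.differentiable (by simp) y).hasDerivAt.ofReal_comp)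
      hp''.ofReal_comp hw]

end RealPhase

theorem tarama_gauge_transformation_general
    (a b : ℝ → ℂ) (f : ℝ → ℝ → ℂ) (u : ℝ → ℝ → ℂ)
    (ha : ContDiff ℝ (⊤ : ℕ∞) a)
    (haL2 : MemLp (fun x => (a x).im) 2 volume)
    (hux : ∀ t : ℝ, ContDiff ℝ 3 (u t))
    (heq : ∀ t x : ℝ,
      deriv (fun s => u s x) t + iteratedDeriv 3 (u t) x
          + a x * deriv (u t) x + b x * u t x = f t x)
    (Φ : ℝ → ℝ) (hΦ : ∀ x : ℝ, Φ x = (1 / 3) * ∫ y in Set.Iic x, ((a y).im) ^ 2)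
    (v : ℝ → ℝ → ℂ) (hv : ∀ t x : ℝ, v t x = Complex.exp ((Φ x : ℂ)) * u t x) :
    ∀ t x : ℝ,
      deriv (fun s => v s x) t + iteratedDeriv 3 (v t) x
          - ((((a x).im) ^ 2 : ℝ) : ℂ) * iteratedDeriv 2 (v t) x
          + ((((a x).re + (1 / 3) * ((a x).im) ^ 4
                - 2 * (a x).im * deriv (fun y => (a y).im) x : ℝ) : ℂ)
              + Complex.I * (((a x).im : ℝ) : ℂ)) * deriv (v t) x
          + (b x
              - ((iteratedDeriv 2 (fun y => (1 / 3) * ((a y).im) ^ 2) x : ℝ) : ℂ)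
              + ((3 * ((1 / 3) * ((a x).im) ^ 2)
                    * deriv (fun y => (1 / 3) * ((a y).im) ^ 2) x : ℝ) : ℂ)
              - ((((1 / 3) * ((a x).im) ^ 2) ^ 3 : ℝ) : ℂ)
              - a x * ((((1 / 3) * ((a x).im) ^ 2 : ℝ)) : ℂ)) * v t x
        = Complex.exp ((Φ x : ℂ)) * f t x := by
  intro t x
  have him : ContDiff ℝ (⊤ : ℕ∞) fun y => (a y).im := Complex.imCLM.contDiff.comp ha
  set p : ℝ → ℝ := fun y => 1 / 3 * (a y).im ^ 2 with hp_def
  have hp : ContDiff ℝ 3 p := contDiff_const.mul ((contDiff_infty.mp him 3).pow 2)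
  have hΦp : ∀ y, HasDerivAt Φ (p y) y := fun y => by
    rw [show Φ = _ from funext hΦ]
    exact (hasDerivAt_integral_Iic (fun _ => haL2.integrable_sq.integrableOn)
      (him.continuous.pow 2) y).const_mul _
  have hp' : deriv p x = 2 / 3 * (a x).im * deriv (fun y => (a y).im) x := by
    have h := ((him.differentiable (by simp) x).hasDerivAt.fun_pow 2).const_mul (1 / 3 : ℝ)
    exact h.deriv.trans (by push_cast; ring)
  have hv_t : deriv (fun s => v s x) t = Complex.exp (Φ x) * deriv (fun s => u s x) t := by
    simp only [hv]
    exact deriv_const_mul_field _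
  rw [hv_t, hv t x, show v t = _ from funext (hv t),
    deriv_cexp_ofReal_mul hΦp ((hux t).differentiable (by norm_num)),
    iteratedDeriv_two_cexp_ofReal_mul hΦp (hp.of_le (by norm_num)) ((hux t).of_le (by norm_num)),
    iteratedDeriv_three_cexp_ofReal_mul hΦp hp (hux t), hp']
  simp only [hp_def]
  push_cast
  linear_combination Complex.exp (Φ x) * heq t x
    - Complex.exp (Φ x) * (deriv (u t) x + (a x).im ^ 2 * u t x / 3)
      * (Complex.re_add_im (a x)).symm

/-- Tarama's gauge transformation. Let `a, b : ℝ → ℂ` be smooth with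
`Im a ∈ L²(ℝ;ℝ)`, and let `u` (C¹ in `t`, C³ in `x`) solve
`u_t + u_{xxx} + a(x)u_x + b(x)u = f`. With `Φ(x) = (1/3)∫_{−∞}^x (Im a)² dy` and
`v = e^{Φ(x)}u`, the function `v` solves
`v_t + v_{xxx} − (Im a)² v_{xx} + (ã + i Im a) v_x + b̃ v = e^{Φ} f`, where
`ã = Re a + (1/3)(Im a)⁴ − 2(Im a)(Im a)'` is real-valued and
`b̃ = b − Φ''' + 3Φ'Φ'' − (Φ')³ − aΦ'` with `Φ' = (1/3)(Im a)²`. -/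
theorem tarama_gauge_transformation
    (a b : ℝ → ℂ) (f : ℝ → ℝ → ℂ) (u : ℝ → ℝ → ℂ)
    (ha : ContDiff ℝ (⊤ : ℕ∞) a) (hb : ContDiff ℝ (⊤ : ℕ∞) b)
    (haL2 : MemLp (fun x => (a x).im) 2 volume)
    (hut : ∀ x : ℝ, ContDiff ℝ 1 (fun t => u t x))
    (hux : ∀ t : ℝ, ContDiff ℝ 3 (u t))
    (heq : ∀ t x : ℝ,
      deriv (fun s => u s x) t + iteratedDeriv 3 (u t) x
          + a x * deriv (u t) x + b x * u t x = f t x)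
    (Φ : ℝ → ℝ) (hΦ : ∀ x : ℝ, Φ x = (1 / 3) * ∫ y in Set.Iic x, ((a y).im) ^ 2)
    (v : ℝ → ℝ → ℂ) (hv : ∀ t x : ℝ, v t x = Complex.exp ((Φ x : ℂ)) * u t x) :
    ∀ t x : ℝ,
      deriv (fun s => v s x) t + iteratedDeriv 3 (v t) x
          - ((((a x).im) ^ 2 : ℝ) : ℂ) * iteratedDeriv 2 (v t) x
          + ((((a x).re + (1 / 3) * ((a x).im) ^ 4
                - 2 * (a x).im * deriv (fun y => (a y).im) x : ℝ) : ℂ)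
              + Complex.I * (((a x).im : ℝ) : ℂ)) * deriv (v t) x
          + (b x
              - ((iteratedDeriv 2 (fun y => (1 / 3) * ((a y).im) ^ 2) x : ℝ) : ℂ)
              + ((3 * ((1 / 3) * ((a x).im) ^ 2)
                    * deriv (fun y => (1 / 3) * ((a y).im) ^ 2) x : ℝ) : ℂ)
              - ((((1 / 3) * ((a x).im) ^ 2) ^ 3 : ℝ) : ℂ)
              - a x * ((((1 / 3) * ((a x).im) ^ 2 : ℝ)) : ℂ)) * v t x
        = Complex.exp ((Φ x : ℂ)) * f t x :=
  tarama_gauge_transformation_general a b f u ha haL2 hux heq Φ hΦ v hv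
end
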